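/- arXiv:2501.18932 — 5 statements merged into one kernel-verified Lean document; each statement's English description precedes it below -/
import Mathlib

section
/- Let n be a positive integer and let a with 1 ≤ a < n be a nonzero zero-divisor of Z_n, and set d = gcd(a,n). If a² ≠ 0 in Z_n, then the degree of the vertex a in the zero-divisor graph Γ(Z_n) equals d − 1. -/
/-- `x` is a vertex of the zero-divisor graph of `ZMod n`:
a nonzero zero-divisor. -/
def ZDVertex (n : ℕ) (x : ZMod n) : Prop :=
  x ≠ 0 ∧ ∃ y : ZMod n, y ≠ 0 ∧ x * y = 0

/-- The zero-divisor graph `Γ(ZMod n)`: vertices are the nonzero zero-divisors,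
two distinct vertices are adjacent iff their product is zero. -/
def zdGraph (n : ℕ) : SimpleGraph {x : ZMod n // ZDVertex n x} where
  Adj a b := a ≠ b ∧ (a : ZMod n) * (b : ZMod n) = 0
  symm := by
    constructor
    intro a b h
    exact ⟨h.1.symm, by rw [mul_comm]; exact h.2⟩
  loopless := by
    constructor
    intro a h
    exact h.1 rfl

/-!
Multiplication by `a` is an additive endomorphism of `ZMod n` whose image is the cyclic subgroup
generated by `a`, of order `n / gcd(a, n)`; hence its kernel, the annihilator of `a`, has
`gcd(a, n)` elements. When `a² ≠ 0`, the neighbours of `a` are exactly the nonzero elements of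
this annihilator (each of them is a zero-divisor, with partner `a`), so there are `gcd(a, n) - 1`.
-/

theorem ZDVertex.ne_zero {n : ℕ} {x : ZMod n} (hx : ZDVertex n x) : n ≠ 0 := by
  rintro rfl
  obtain ⟨hx0, y, hy0, hxy⟩ := hx
  exact mul_ne_zero hx0 hy0 hxy

namespace ZMod

variable {n : ℕ} [NeZero n]

theorem range_mulLeft (a : ZMod n) :
    (AddMonoidHom.mulLeft a).range = AddSubgroup.zmultiples a := by
  ext x
  simp only [AddMonoidHom.mem_range, AddMonoidHom.coe_mulLeft, AddSubgroup.mem_zmultiples_iff]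
  constructor
  · rintro ⟨b, rfl⟩
    exact ⟨b.val, by rw [natCast_zsmul, nsmul_eq_mul, natCast_zmod_val, mul_comm]⟩
  · rintro ⟨k, rfl⟩
    exact ⟨k, by rw [zsmul_eq_mul, mul_comm]⟩

theorem ncard_setOf_mul_eq_zero (a : ZMod n) :
    {b : ZMod n | a * b = 0}.ncard = a.val.gcd n := by
  set f := AddMonoidHom.mulLeft a
  have hn : n ≠ 0 := NeZero.ne n
  have hker : Nat.card f.ker * (n / n.gcd a.val) = n := by
    rw [← addOrderOf_coe _ hn, natCast_zmod_val, ← Nat.card_zmultiples, ← range_mulLeft,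
      ← AddSubgroup.index_ker, AddSubgroup.card_mul_index, Nat.card_zmod]
  have hdiv : n.gcd a.val ∣ n := Nat.gcd_dvd_left n a.val
  have hquot : n / n.gcd a.val ≠ 0 := by
    intro h
    rw [h, mul_zero] at hker
    exact hn hker.symm
  rw [← Nat.card_coe_set_eq, Nat.gcd_comm]
  exact Nat.eq_of_mul_eq_mul_right (Nat.pos_of_ne_zero hquot)
    (hker.trans (Nat.mul_div_cancel' hdiv).symm)

end ZMod

theorem zdGraph_image_neighborSet {n : ℕ} (a : {x : ZMod n // ZDVertex n x})
    (ha : (a : ZMod n) * a ≠ 0) :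
    Subtype.val '' (zdGraph n).neighborSet a = {b : ZMod n | (a : ZMod n) * b = 0} \ {0} := by
  ext b
  constructor
  · rintro ⟨b, hab, rfl⟩
    exact ⟨hab.2, b.2.1⟩
  · rintro ⟨hab, hb0⟩
    have hb : ZDVertex n b := ⟨hb0, a, a.2.1, by rwa [mul_comm]⟩
    refine ⟨⟨b, hb⟩, ⟨?_, hab⟩, rfl⟩
    rintro rfl
    exact ha hab

theorem stmt4_general (n : ℕ)
    (a : {x : ZMod n // ZDVertex n x})
    (h2 : (a : ZMod n) * (a : ZMod n) ≠ 0) :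
    ((zdGraph n).neighborSet a).ncard = Nat.gcd (a : ZMod n).val n - 1 := by
  have : NeZero n := ⟨a.2.ne_zero⟩
  rw [← Set.ncard_image_of_injective _ Subtype.val_injective, zdGraph_image_neighborSet a h2,
    Set.ncard_sdiff_singleton_of_mem (s := {b | (a : ZMod n) * b = 0}) (mul_zero _),
    ZMod.ncard_setOf_mul_eq_zero]

theorem stmt4 (n : ℕ) (hn : 0 < n)
    (a : {x : ZMod n // ZDVertex n x})
    (h2 : (a : ZMod n) * (a : ZMod n) ≠ 0) :
    ((zdGraph n).neighborSet a).ncard = Nat.gcd (a : ZMod n).val n - 1 :=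
  stmt4_general n a h2
end

section
/- Let p be a prime and k > 1 a positive integer. Then the set of central vertices of the zero-divisor graph Γ(Z_{p^k}) is exactly { p^{k−1}, 2p^{k−1}, …, (p−1)p^{k−1} }, i.e., the set of nonzero multiples of p^{k−1} in Z_{p^k}. -/
/-- The eccentricity of a vertex: the supremum of distances to all vertices. -/
noncomputable def eccent {V : Type*} (G : SimpleGraph V) (u : V) : ℕ∞ :=
  ⨆ v, G.edist u v

/-- A central vertex: one of minimum eccentricity. -/
def IsCentral {V : Type*} (G : SimpleGraph V) (u : V) : Prop :=
  ∀ v, eccent G u ≤ eccent G v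

/-! Every vertex of `Γ(ℤ/p^k)` is a non-unit, hence a multiple of `p`. So a vertex `a` is
adjacent to all other vertices as soon as `a p = 0`, i.e. when `a` is a nonzero multiple of
`p^(k-1)`, and such vertices exist; they have eccentricity `1`, the least possible. If instead
`a p ≠ 0`, then also `a (p + p^(k-1)) = a p ≠ 0`, and `a` is not adjacent to whichever of the two
distinct vertices `p`, `p + p^(k-1)` differs from it, so its eccentricity is at least `2`. -/

lemma eccent_eq_simpleGraph_eccent {V : Type*} (G : SimpleGraph V) (u : V) :
    eccent G u = G.eccent u :=
  rfl

lemma isCentral_iff_forall_adj {V : Type*} {G : SimpleGraph V} {u w : V}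
    (hw : ∀ v, w ≠ v → G.Adj w v) :
    IsCentral G u ↔ ∀ v, u ≠ v → G.Adj u v := by
  simp only [IsCentral, eccent_eq_simpleGraph_eccent, ← SimpleGraph.eccent_le_one_iff]
  refine ⟨fun hu => (hu w).trans ((G.eccent_le_one_iff w).2 hw), fun hu v => ?_⟩
  by_cases huv : u = v
  · rw [huv]
  · have : Nontrivial V := ⟨⟨u, v, huv⟩⟩
    exact hu.trans (Order.one_le_iff_ne_zero.2 (G.eccent_ne_zero v))

lemma ZDVertex.not_isUnit {n : ℕ} {x : ZMod n} (hx : ZDVertex n x) : ¬IsUnit x := by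
  obtain ⟨-, y, hy, hxy⟩ := hx
  exact fun hu => hy (hu.mul_right_eq_zero.1 hxy)

namespace ZMod

variable {p k : ℕ}

lemma natCast_pow_self_eq_zero : (p : ZMod (p ^ k)) ^ k = 0 := by
  rw [← Nat.cast_pow, natCast_self]

lemma natCast_pow_ne_zero_of_lt {j : ℕ} (hp : 1 < p) (hj : j < k) :
    (p : ZMod (p ^ k)) ^ j ≠ 0 := by
  rw [← Nat.cast_pow, Ne, natCast_eq_zero_iff, Nat.pow_dvd_pow_iff_le_right hp]
  omega

lemma exists_eq_natCast_mul_of_not_isUnit (hp : p.Prime) {x : ZMod (p ^ k)} (hx : ¬IsUnit x) :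
    ∃ c, x = p * c := by
  have : NeZero (p ^ k) := ⟨pow_ne_zero k hp.ne_zero⟩
  rw [← natCast_zmod_val x, isUnit_iff_coprime] at hx
  obtain ⟨c, hc⟩ : p ∣ x.val := by_contra fun h => hx (hp.coprime_pow_of_not_dvd h)
  exact ⟨c, by rw [← natCast_zmod_val x, hc, Nat.cast_mul]⟩

lemma mul_natCast_eq_zero_iff (hp : 1 < p) (hk : 0 < k) {x : ZMod (p ^ k)} (hx : x ≠ 0) :
    x * p = 0 ↔
      ∃ i : ℕ, 1 ≤ i ∧ i ≤ p - 1 ∧ x = ((i * p ^ (k - 1) : ℕ) : ZMod (p ^ k)) := by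
  have : NeZero (p ^ k) := ⟨by positivity⟩
  have hpk : p ^ k = p ^ (k - 1) * p := by rw [← pow_succ, Nat.sub_add_cancel hk]
  constructor
  · intro h
    rw [← natCast_zmod_val x, ← Nat.cast_mul, natCast_eq_zero_iff] at h
    obtain ⟨i, hi⟩ := (Nat.mul_dvd_mul_iff_right (by omega)).1 ((dvd_of_eq hpk.symm).trans h)
    have hi0 : i ≠ 0 := by
      rintro rfl
      exact hx ((val_eq_zero x).1 (by simpa using hi))
    have hip : i < p := by
      have := x.val_lt
      rw [hi, hpk] at this
      exact Nat.lt_of_mul_lt_mul_left this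
    exact ⟨i, by omega, by omega, by rw [← natCast_zmod_val x, hi, mul_comm]⟩
  · rintro ⟨i, -, -, rfl⟩
    rw [← Nat.cast_mul, natCast_eq_zero_iff, mul_assoc, ← hpk]
    exact dvd_mul_left _ _

end ZMod

open ZMod in
lemma zdGraph_forall_adj_iff {p k : ℕ} (hp : p.Prime) (hk : 1 < k)
    (a : {x : ZMod (p ^ k) // ZDVertex (p ^ k) x}) :
    (∀ b, a ≠ b → (zdGraph (p ^ k)).Adj a b) ↔ (a : ZMod (p ^ k)) * p = 0 := by
  set q : ZMod (p ^ k) := (p : ZMod (p ^ k))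
  have hq_pow : q ^ k = 0 := natCast_pow_self_eq_zero
  have hq_mul : q * q ^ (k - 1) = 0 := by
    rw [← pow_succ', Nat.sub_add_cancel (by omega), hq_pow]
  have hq_pred : q ^ (k - 1) ≠ 0 := natCast_pow_ne_zero_of_lt hp.one_lt (by omega)
  obtain ⟨c, hc⟩ := exists_eq_natCast_mul_of_not_isUnit hp a.2.not_isUnit
  have ha_ann : (a : ZMod (p ^ k)) * q ^ (k - 1) = 0 := by rw [hc, mul_right_comm, hq_mul, zero_mul]
  constructor
  · intro ha
    by_contra haq
    have eq_of_mul_ne_zero : ∀ b, (a : ZMod (p ^ k)) * b ≠ 0 → b * q ^ (k - 1) = 0 →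
        (a : ZMod (p ^ k)) = b := fun b hab hb => by_contra fun hne =>
      hab (ha ⟨b, right_ne_zero_of_mul hab, _, hq_pred, hb⟩ (Subtype.coe_ne_coe.1 hne)).2
    have hq_eq : (a : ZMod (p ^ k)) = q := eq_of_mul_ne_zero q haq hq_mul
    -- `a` is a multiple of `p`, so `q + q ^ (k - 1)` has the same product with `a` as `q`.
    have hr_eq : (a : ZMod (p ^ k)) = q + q ^ (k - 1) := by
      refine eq_of_mul_ne_zero _ (by rwa [mul_add, ha_ann, add_zero]) ?_
      rw [add_mul, hq_mul, zero_add, ← pow_add]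
      exact pow_eq_zero_of_le (by omega) hq_pow
    exact hq_pred (by simpa [hq_eq] using hr_eq)
  · rintro ha b hab
    obtain ⟨d, hd⟩ := exists_eq_natCast_mul_of_not_isUnit hp b.2.not_isUnit
    exact ⟨hab, by rw [hd, ← mul_assoc, ha, zero_mul]⟩

theorem stmt6 (p k : ℕ) (hp : p.Prime) (hk : 1 < k)
    (a : {x : ZMod (p ^ k) // ZDVertex (p ^ k) x}) :
    IsCentral (zdGraph (p ^ k)) a ↔
      ∃ i : ℕ, 1 ≤ i ∧ i ≤ p - 1 ∧
        (a : ZMod (p ^ k)) = ((i * p ^ (k - 1) : ℕ) : ZMod (p ^ k)) := by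
  have hq : (p : ZMod (p ^ k)) ≠ 0 := by
    simpa using ZMod.natCast_pow_ne_zero_of_lt (j := 1) hp.one_lt hk
  have hq_pred : (p : ZMod (p ^ k)) ^ (k - 1) ≠ 0 :=
    ZMod.natCast_pow_ne_zero_of_lt hp.one_lt (by omega)
  have hq_ann : (p : ZMod (p ^ k)) ^ (k - 1) * p = 0 := by
    rw [← pow_succ, Nat.sub_add_cancel (by omega), ZMod.natCast_pow_self_eq_zero]
  have hdom := (zdGraph_forall_adj_iff hp hk ⟨_, hq_pred, p, hq, hq_ann⟩).2 hq_ann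
  rw [isCentral_iff_forall_adj hdom, zdGraph_forall_adj_iff hp hk,
    ZMod.mul_natCast_eq_zero_iff hp.one_lt (by omega) a.2.1]
end

section
/- Let n = pq where p and q are distinct primes. Then the zero-divisor graph Γ(Z_n) is a complete bipartite graph whose vertex set is partitioned into the parts {p, 2p, …, (q−1)p} (the nonzero multiples of p) and {q, 2q, …, (p−1)q} (the nonzero multiples of q): every vertex in one part is adjacent to every vertex in the other part, and no two vertices in the same part are adjacent. -/
/-!
A nonzero class `x` modulo `pq` is divisible by at most one of `p`, `q`, while `pq ∣ xy` means
`p ∣ xy` and `q ∣ xy`; by Euclid's lemma, for nonzero `x`, `y` this happens exactly when `p` divides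
one factor and `q` the other. So every nonzero zero-divisor lies in exactly one of the two classes
of multiples, and two vertices are adjacent exactly when they lie in different classes
(distinctness being then automatic).
-/

theorem Nat.Coprime.mul_dvd_iff {p q n : ℕ} (hpq : p.Coprime q) : p * q ∣ n ↔ p ∣ n ∧ q ∣ n :=
  ⟨fun h => ⟨dvd_of_mul_right_dvd h, dvd_of_mul_left_dvd h⟩,
    fun h => hpq.mul_dvd_of_dvd_of_dvd h.1 h.2⟩

namespace ZMod

theorem eq_zero_iff_dvd_val {n : ℕ} (x : ZMod n) : x = 0 ↔ n ∣ x.val := by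
  rw [← val_eq_zero]
  refine ⟨fun h => h ▸ dvd_zero n, fun h => ?_⟩
  rcases n.eq_zero_or_pos with rfl | hn
  · exact Nat.eq_zero_of_zero_dvd h
  · have : NeZero n := ⟨hn.ne'⟩
    exact Nat.eq_zero_of_dvd_of_lt h (val_lt x)

theorem mul_eq_zero_iff_dvd_val_mul {n : ℕ} (x y : ZMod n) : x * y = 0 ↔ n ∣ x.val * y.val := by
  rw [eq_zero_iff_dvd_val, val_mul, Nat.dvd_mod_iff dvd_rfl]

theorem eq_zero_iff_dvd_val_and_dvd_val {p q : ℕ} (hpq : p.Coprime q) (x : ZMod (p * q)) :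
    x = 0 ↔ p ∣ x.val ∧ q ∣ x.val := by
  rw [eq_zero_iff_dvd_val, hpq.mul_dvd_iff]

theorem mul_eq_zero_iff_of_ne_zero {p q : ℕ} (hp : p.Prime) (hq : q.Prime) (hpq : p ≠ q)
    {x y : ZMod (p * q)} (hx : x ≠ 0) (hy : y ≠ 0) :
    x * y = 0 ↔ (p ∣ x.val ∧ q ∣ y.val) ∨ (q ∣ x.val ∧ p ∣ y.val) := by
  have hcop : p.Coprime q := (Nat.coprime_primes hp hq).mpr hpq
  rw [Ne, eq_zero_iff_dvd_val_and_dvd_val hcop] at hx hy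
  rw [mul_eq_zero_iff_dvd_val_mul, hcop.mul_dvd_iff, hp.dvd_mul, hq.dvd_mul]
  tauto

end ZMod

section PrimeProduct

variable {p q : ℕ} (hp : p.Prime) (hq : q.Prime) (hpq : p ≠ q)
include hp hq hpq

theorem ZDVertex.dvd_val_xor {x : ZMod (p * q)} (hx : ZDVertex (p * q) x) :
    (p ∣ x.val ∧ ¬ q ∣ x.val) ∨ (q ∣ x.val ∧ ¬ p ∣ x.val) := by
  obtain ⟨hx0, y, hy0, hxy⟩ := hx
  have hcop : p.Coprime q := (Nat.coprime_primes hp hq).mpr hpq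
  have hx_not_both := (ZMod.eq_zero_iff_dvd_val_and_dvd_val hcop x).not.mp hx0
  rw [ZMod.mul_eq_zero_iff_of_ne_zero hp hq hpq hx0 hy0] at hxy
  tauto

theorem zdGraph_adj_iff (a b : {x : ZMod (p * q) // ZDVertex (p * q) x}) :
    (zdGraph (p * q)).Adj a b ↔
      (p ∣ (a : ZMod (p * q)).val ∧ q ∣ (b : ZMod (p * q)).val) ∨
        (q ∣ (a : ZMod (p * q)).val ∧ p ∣ (b : ZMod (p * q)).val) := by
  have ha := a.2.dvd_val_xor hp hq hpq
  have hb := b.2.dvd_val_xor hp hq hpq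
  have hmul := ZMod.mul_eq_zero_iff_of_ne_zero hp hq hpq a.2.1 b.2.1
  refine ⟨fun hadj => hmul.mp hadj.2, fun hab => ⟨?_, hmul.mpr hab⟩⟩
  rintro rfl
  tauto

end PrimeProduct

theorem stmt8 (p q : ℕ) (hp : p.Prime) (hq : q.Prime) (hpq : p ≠ q) :
    (∀ a : {x : ZMod (p * q) // ZDVertex (p * q) x},
      (p ∣ (a : ZMod (p * q)).val ∧ ¬ q ∣ (a : ZMod (p * q)).val) ∨
        (q ∣ (a : ZMod (p * q)).val ∧ ¬ p ∣ (a : ZMod (p * q)).val)) ∧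
    (∀ a b : {x : ZMod (p * q) // ZDVertex (p * q) x},
      (zdGraph (p * q)).Adj a b ↔
        (p ∣ (a : ZMod (p * q)).val ∧ q ∣ (b : ZMod (p * q)).val) ∨
          (q ∣ (a : ZMod (p * q)).val ∧ p ∣ (b : ZMod (p * q)).val)) :=
  ⟨fun a => a.2.dvd_val_xor hp hq hpq, zdGraph_adj_iff hp hq hpq⟩
end

section
/- Let p and q be two distinct primes dividing a positive integer n with n > pq. Then the distance between the vertices p and q in the zero-divisor graph Γ(Z_n) equals 3. -/
/-!
Write `n = p q m`; then `m > 1` because `n > pq`. The path `p — qm — pm — q` shows that the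
distance is at most 3. Conversely `p` and `q` are distinct and not adjacent (`n ∤ pq`), and they
have no common neighbour: since `p` and `q` are coprime, `px = qx = 0` forces `x = 0`.
-/

theorem IsCoprime.eq_zero_of_mul_eq_zero {R : Type*} [CommRing R] {a b x : R}
    (h : IsCoprime a b) (ha : a * x = 0) (hb : b * x = 0) : x = 0 := by
  obtain ⟨s, t, hst⟩ := h
  linear_combination (-x) * hst + s * ha + t * hb

namespace SimpleGraph

variable {V : Type*} {G : SimpleGraph V}

theorem dist_eq_three_of_adj_of_adj_of_adj {u a b v : V} (hne : u ≠ v) (hnadj : ¬G.Adj u v)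
    (hcommon : G.commonNeighbors u v = ∅) (h₁ : G.Adj u a) (h₂ : G.Adj a b) (h₃ : G.Adj b v) :
    G.dist u v = 3 := by
  have hle : G.edist u v ≤ 3 := (Walk.cons h₁ (.cons h₂ (.cons h₃ .nil))).edist_le
  have hlt : 2 < G.edist u v := two_lt_edist_iff.mpr ⟨hne, hnadj, hcommon⟩
  have : G.edist u v = 3 := le_antisymm hle (Order.add_one_le_of_lt hlt)
  rw [dist, this]
  rfl

end SimpleGraph

namespace ZMod

theorem eq_of_natCast_eq_of_lt {n a b : ℕ} (ha : a < n) (hb : b < n) (h : (a : ZMod n) = b) :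
    a = b := by
  rwa [natCast_eq_natCast_iff', Nat.mod_eq_of_lt ha, Nat.mod_eq_of_lt hb] at h

theorem natCast_ne_zero_of_pos_of_lt {n a : ℕ} (h0 : 0 < a) (hn : a < n) : (a : ZMod n) ≠ 0 :=
  fun h ↦ (Nat.le_of_dvd h0 ((natCast_eq_zero_iff a n).mp h)).not_gt hn

end ZMod

theorem zdVertex_natCast_of_dvd {n d : ℕ} (h1 : 1 < d) (hdn : d < n) (hd : d ∣ n) :
    ZDVertex n d := by
  obtain ⟨e, rfl⟩ := hd
  have he : 0 < e := Nat.pos_of_mul_pos_left (by omega : 0 < d * e)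
  refine ⟨ZMod.natCast_ne_zero_of_pos_of_lt (by omega) hdn,
    e, ZMod.natCast_ne_zero_of_pos_of_lt he ?_, ?_⟩
  · exact lt_mul_left he h1
  · rw [← Nat.cast_mul, ZMod.natCast_self]

theorem zdGraph_adj_natCast_iff {n a b : ℕ} (han : a < n) (hbn : b < n)
    {ha : ZDVertex n a} {hb : ZDVertex n b} :
    (zdGraph n).Adj ⟨a, ha⟩ ⟨b, hb⟩ ↔ a ≠ b ∧ n ∣ a * b := by
  simp only [zdGraph, ne_eq, Subtype.mk.injEq, ← Nat.cast_mul, ZMod.natCast_eq_zero_iff]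
  exact and_congr_left' (not_congr ⟨ZMod.eq_of_natCast_eq_of_lt han hbn, congrArg _⟩)

theorem zdGraph_commonNeighbors_eq_empty_of_isCoprime {n : ℕ} {u v : {x : ZMod n // ZDVertex n x}}
    (h : IsCoprime (u : ZMod n) v) : (zdGraph n).commonNeighbors u v = ∅ := by
  refine Set.eq_empty_of_forall_notMem fun w hw ↦ w.2.1 ?_
  rw [SimpleGraph.mem_commonNeighbors] at hw
  exact h.eq_zero_of_mul_eq_zero hw.1.2 hw.2.2

theorem stmt10_general (n p q : ℕ) (hp : p.Prime) (hq : q.Prime)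
    (hpq : p ≠ q) (hpn : p ∣ n) (hqn : q ∣ n) (hbig : p * q < n)
    (hvp : ZDVertex n ((p : ZMod n))) (hvq : ZDVertex n ((q : ZMod n))) :
    (zdGraph n).dist ⟨(p : ZMod n), hvp⟩ ⟨(q : ZMod n), hvq⟩ = 3 := by
  have hcop : p.Coprime q := (Nat.coprime_primes hp hq).mpr hpq
  obtain ⟨m, rfl⟩ := hcop.mul_dvd_of_dvd_of_dvd hpn hqn
  have hp1 := hp.one_lt
  have hq1 := hq.one_lt
  have hm : 1 < m := Nat.lt_of_mul_lt_mul_left (a := p * q) (by rwa [mul_one])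
  have hp_lt : p < p * q * m := by nlinarith
  have hq_lt : q < p * q * m := by nlinarith
  have hqm_lt : q * m < p * q * m := by nlinarith
  have hpm_lt : p * m < p * q * m := by nlinarith
  have hqm : ZDVertex (p * q * m) ((q * m : ℕ) : ZMod (p * q * m)) :=
    zdVertex_natCast_of_dvd (by nlinarith) hqm_lt ⟨p, by ring⟩
  have hpm : ZDVertex (p * q * m) ((p * m : ℕ) : ZMod (p * q * m)) :=
    zdVertex_natCast_of_dvd (by nlinarith) hpm_lt ⟨q, by ring⟩
  refine SimpleGraph.dist_eq_three_of_adj_of_adj_of_adj (a := ⟨_, hqm⟩) (b := ⟨_, hpm⟩) ?_ ?_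
    (zdGraph_commonNeighbors_eq_empty_of_isCoprime hcop.cast) ?_ ?_ ?_
  · exact fun h ↦ hpq (ZMod.eq_of_natCast_eq_of_lt hp_lt hq_lt (congrArg Subtype.val h))
  · rw [zdGraph_adj_natCast_iff hp_lt hq_lt]
    exact fun h ↦ (Nat.le_of_dvd (by positivity) h.2).not_gt hbig
  · rw [zdGraph_adj_natCast_iff hp_lt hqm_lt]
    refine ⟨fun h ↦ hpq ?_, ⟨1, by ring⟩⟩
    exact ((Nat.prime_dvd_prime_iff_eq hq hp).mp ⟨m, h⟩).symm
  · rw [zdGraph_adj_natCast_iff hqm_lt hpm_lt]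
    exact ⟨fun h ↦ hpq (Nat.eq_of_mul_eq_mul_right (by omega) h).symm, ⟨m, by ring⟩⟩
  · rw [zdGraph_adj_natCast_iff hpm_lt hq_lt]
    refine ⟨fun h ↦ hpq ?_, ⟨1, by ring⟩⟩
    exact (Nat.prime_dvd_prime_iff_eq hp hq).mp ⟨m, by rw [h]⟩

theorem stmt10 (n p q : ℕ) (hn : 0 < n) (hp : p.Prime) (hq : q.Prime)
    (hpq : p ≠ q) (hpn : p ∣ n) (hqn : q ∣ n) (hbig : p * q < n)
    (hvp : ZDVertex n ((p : ZMod n))) (hvq : ZDVertex n ((q : ZMod n))) :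
    (zdGraph n).dist ⟨(p : ZMod n), hvp⟩ ⟨(q : ZMod n), hvq⟩ = 3 :=
  stmt10_general n p q hp hq hpq hpn hqn hbig hvp hvq
end

section
/- Let n be a positive integer divisible by at least two distinct primes p and q, with n > pq, and let a be a vertex of the zero-divisor graph Γ(Z_n) such that r·a = 0 in Z_n for some prime r dividing n. Then for every other vertex b of Γ(Z_n), the distance d(a,b) in Γ(Z_n) is at most 2; hence the eccentricity of a is at most 2. -/
/-!
Since `r * a = 0`, the vertex `a` kills every multiple of `r`. A vertex `b` is a zero-divisor, hence
not a unit, so some prime `s ∣ n` divides it. If `r` divides `b` then `a * b = 0`. Otherwise `s ≠ r`,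
so `r ∣ n / s`, and `c = n / s` is a nonzero element killed both by `a` (as `c` is a multiple of `r`)
and by `b` (as `b` is a multiple of `s`), giving the path `a - c - b`.
-/

lemma mul_eq_zero_of_dvd_of_mul_eq_zero {R : Type*} [CommSemiring R] {x a b : R}
    (hb : x ∣ b) (ha : x * a = 0) : a * b = 0 := by
  obtain ⟨y, rfl⟩ := hb
  rw [mul_left_comm, ← mul_assoc, ha, zero_mul]

lemma Nat.Prime.dvd_div_of_dvd {r s n : ℕ} (hr : r.Prime) (hs : s.Prime) (hrs : r ≠ s)
    (hrn : r ∣ n) (hsn : s ∣ n) : r ∣ n / s := by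
  rw [← Nat.mul_div_cancel' hsn] at hrn
  exact (hr.dvd_mul.mp hrn).resolve_left fun h => hrs ((Nat.prime_dvd_prime_iff_eq hr hs).mp h)

namespace ZMod

variable {n : ℕ}

lemma exists_prime_natCast_dvd_of_not_isUnit [NeZero n] {b : ZMod n} (hb : ¬IsUnit b) :
    ∃ s, s.Prime ∧ s ∣ n ∧ (s : ZMod n) ∣ b := by
  have hgcd : b.val.gcd n ≠ 1 := fun h =>
    hb (by simpa only [natCast_zmod_val] using (isUnit_iff_coprime b.val n).mpr h)
  refine ⟨(b.val.gcd n).minFac, Nat.minFac_prime hgcd,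
    (Nat.minFac_dvd _).trans (Nat.gcd_dvd_right _ _), ?_⟩
  simpa only [natCast_zmod_val] using
    Nat.cast_dvd_cast (α := ZMod n) ((Nat.minFac_dvd _).trans (Nat.gcd_dvd_left b.val n))

lemma natCast_mul_natCast_div_eq_zero {s : ℕ} (hsn : s ∣ n) :
    (s : ZMod n) * ((n / s : ℕ) : ZMod n) = 0 := by
  rw [← Nat.cast_mul, Nat.mul_div_cancel' hsn, natCast_self]

lemma natCast_div_ne_zero [NeZero n] {s : ℕ} (hs : 1 < s) (hsn : s ∣ n) :
    ((n / s : ℕ) : ZMod n) ≠ 0 := by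
  have hn : 0 < n := Nat.pos_of_neZero n
  rw [Ne, natCast_eq_zero_iff]
  intro h
  have hdiv : n / s = 0 := Nat.eq_zero_of_dvd_of_lt h (Nat.div_lt_self hn hs)
  rw [Nat.div_eq_zero_iff] at hdiv
  have := Nat.le_of_dvd hn hsn
  omega

end ZMod

lemma eccent_le_of_forall_ne {V : Type*} {G : SimpleGraph V} {u : V} {k : ℕ∞}
    (h : ∀ v, v ≠ u → G.edist u v ≤ k) : eccent G u ≤ k := by
  refine iSup_le fun v => ?_
  rcases eq_or_ne v u with rfl | hv
  · simp only [SimpleGraph.edist_self, zero_le]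
  · exact h v hv

namespace zdGraph

variable {n : ℕ} {x y z : {x : ZMod n // ZDVertex n x}}

lemma edist_le_one_of_mul_eq_zero (h : (x : ZMod n) * y = 0) : (zdGraph n).edist x y ≤ 1 := by
  rcases eq_or_ne x y with rfl | hne
  · simp only [SimpleGraph.edist_self, zero_le]
  · exact (SimpleGraph.edist_eq_one_iff_adj (G := zdGraph n)).mpr ⟨hne, h⟩ |>.le

lemma edist_le_two_of_mul_eq_zero (hxz : (x : ZMod n) * z = 0) (hzy : (z : ZMod n) * y = 0) :
    (zdGraph n).edist x y ≤ 2 :=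
  calc (zdGraph n).edist x y ≤ (zdGraph n).edist x z + (zdGraph n).edist z y :=
        SimpleGraph.edist_triangle
    _ ≤ 1 + 1 := add_le_add (edist_le_one_of_mul_eq_zero hxz) (edist_le_one_of_mul_eq_zero hzy)
    _ = 2 := one_add_one_eq_two

end zdGraph

theorem stmt13_general (n : ℕ) (hn : 0 < n)
    (a : {x : ZMod n // ZDVertex n x})
    (r : ℕ) (hr : r.Prime) (hrn : r ∣ n)
    (hra : (r : ZMod n) * (a : ZMod n) = 0) :
    (∀ b : {x : ZMod n // ZDVertex n x}, b ≠ a → (zdGraph n).edist a b ≤ 2) ∧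
      eccent (zdGraph n) a ≤ 2 := by
  have : NeZero n := ⟨hn.ne'⟩
  have hdist : ∀ b : {x : ZMod n // ZDVertex n x}, b ≠ a → (zdGraph n).edist a b ≤ 2 := by
    intro b _
    obtain ⟨s, hs, hsn, hsb⟩ := ZMod.exists_prime_natCast_dvd_of_not_isUnit b.prop.not_isUnit
    by_cases hrb : (r : ZMod n) ∣ b
    · exact (zdGraph.edist_le_one_of_mul_eq_zero
        (mul_eq_zero_of_dvd_of_mul_eq_zero hrb hra)).trans one_le_two
    have hrs : r ≠ s := by rintro rfl; exact hrb hsb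
    have hac : (a : ZMod n) * ((n / s : ℕ) : ZMod n) = 0 :=
      mul_eq_zero_of_dvd_of_mul_eq_zero (Nat.cast_dvd_cast (hr.dvd_div_of_dvd hs hrs hrn hsn)) hra
    let c : {x : ZMod n // ZDVertex n x} :=
      ⟨(n / s : ℕ), ZMod.natCast_div_ne_zero hs.one_lt hsn, a, a.prop.1, by rwa [mul_comm]⟩
    exact zdGraph.edist_le_two_of_mul_eq_zero (z := c) hac
      (mul_eq_zero_of_dvd_of_mul_eq_zero hsb (ZMod.natCast_mul_natCast_div_eq_zero hsn))
  exact ⟨hdist, eccent_le_of_forall_ne hdist⟩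

theorem stmt13 (n p q : ℕ) (hn : 0 < n) (hp : p.Prime) (hq : q.Prime)
    (hpq : p ≠ q) (hpn : p ∣ n) (hqn : q ∣ n) (hbig : p * q < n)
    (a : {x : ZMod n // ZDVertex n x})
    (r : ℕ) (hr : r.Prime) (hrn : r ∣ n)
    (hra : (r : ZMod n) * (a : ZMod n) = 0) :
    (∀ b : {x : ZMod n // ZDVertex n x}, b ≠ a → (zdGraph n).edist a b ≤ 2) ∧
      eccent (zdGraph n) a ≤ 2 :=
  stmt13_general n hn a r hr hrn hra
end
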